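/- arXiv:math/0211232 — 2 statements merged into one kernel-verified Lean document; each statement's English description precedes it below -/
import Mathlib

section
/- For square-free N and each exact divisor m of N, the rescaled partial dual √m·(C_N)^{*,m} is isometric to C_N, i.e. C_N is strongly N-modular. -/
open scoped RealInnerProductSpace

/-- Index type for the lattice `C_N`: the divisors of `N`. -/
def divIdx (N : ℕ) : Type := {d : ℕ // d ∈ N.divisors}

instance (N : ℕ) : Fintype (divIdx N) := by unfold divIdx; infer_instance
instance (N : ℕ) : DecidableEq (divIdx N) := by unfold divIdx; infer_instance

/-- The standard orthogonal basis `√d · e_d` of the lattice `C_N = ⊥_{d∣N} √d ℤ`. -/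
noncomputable def cnBasis (N : ℕ) : divIdx N → EuclideanSpace ℝ (divIdx N) :=
  fun d => Real.sqrt d.1 • EuclideanSpace.single d 1

/-- The lattice `C_N = ⊥_{d∣N} √d ℤ`. -/
noncomputable def CN (N : ℕ) : Submodule ℤ (EuclideanSpace ℝ (divIdx N)) :=
  Submodule.span ℤ (Set.range (cnBasis N))

/-! Since `C_N` is the orthogonal sum of the lines `√d ℤ`, its partial dual is computed one
coordinate at a time: writing `m = m' g`, `d = d' g` with `g = gcd(m, d)`, the real `x` satisfies
`√d x ∈ ℤ` and `m x ∈ √d ℤ` exactly when `√m x ∈ √(m' d') ℤ`. For square-free `N` the map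
`d ↦ m' d' = m d / gcd(m, d)²` is an involution of the divisors of `N` (the action of the
Atkin–Lehner involution `W_m`), so permuting the coordinates along it is an isometry carrying
`√m (C_N)^{*,m}` onto `C_N`. -/

lemma Real.sqrt_mul_sqrt_of_mul_eq {p q r n : ℝ} (hp : 0 ≤ p) (hr : 0 ≤ r) (h : p * q = r ^ 2 * n) :
    √p * √q = r * √n := by
  rw [← Real.sqrt_mul hp, h, Real.sqrt_mul (sq_nonneg r), Real.sqrt_sq hr]

def atkinLehner (m d : ℕ) : ℕ := m / m.gcd d * (d / m.gcd d)

lemma atkinLehner_of_coprime {m' d' g : ℕ} (hcop : m'.Coprime d') (hg : 0 < g) :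
    atkinLehner (m' * g) (d' * g) = m' * d' := by
  simp [atkinLehner, Nat.gcd_mul_right, hcop.gcd_eq_one, hg.ne']

lemma atkinLehner_dvd {m d N : ℕ} (hd : 0 < d) (hm : m ∣ N) (hdN : d ∣ N) :
    atkinLehner m d ∣ N :=
  (Nat.coprime_div_gcd_div_gcd (Nat.gcd_pos_of_pos_right m hd)).mul_dvd_of_dvd_of_dvd
    ((Nat.div_dvd_of_dvd (Nat.gcd_dvd_left m d)).trans hm)
    ((Nat.div_dvd_of_dvd (Nat.gcd_dvd_right m d)).trans hdN)

lemma atkinLehner_atkinLehner {m d : ℕ} (hm : 0 < m) (hd : Squarefree d) :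
    atkinLehner m (atkinLehner m d) = d := by
  obtain ⟨g, m', d', hg, hcop, rfl, rfl⟩ :=
    Nat.exists_coprime' (Nat.gcd_pos_of_pos_right m (Nat.pos_of_ne_zero hd.ne_zero))
  have hgd : g.Coprime d' := Nat.coprime_of_squarefree_mul (by rwa [mul_comm] at hd)
  rw [atkinLehner_of_coprime hcop hg, mul_comm m' g, mul_comm m' d',
    atkinLehner_of_coprime hgd (Nat.pos_of_mul_pos_right hm), mul_comm]

theorem exists_sqrt_mul_eq_int_mul_sqrt_atkinLehner_iff {m d : ℕ} (hm : 0 < m) (hd : 0 < d)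
    (x : ℝ) :
    ((∃ a : ℤ, √d * x = a) ∧ ∃ k : ℤ, m * x = k * √d) ↔
      ∃ b : ℤ, √m * x = b * √(atkinLehner m d) := by
  obtain ⟨g, m', d', hg, hcop, rfl, rfl⟩ :=
    Nat.exists_coprime' (Nat.gcd_pos_of_pos_right m hd)
  rw [atkinLehner_of_coprime hcop hg]
  push_cast
  have hd' : 0 < d' := Nat.pos_of_mul_pos_right hd
  have hm' : 0 < m' := Nat.pos_of_mul_pos_right hm
  have hs : 0 < √((d' : ℝ) * g) := by positivity
  have ht : 0 < √((m' : ℝ) * g) := by positivity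
  have hss : √((d' : ℝ) * g) * √((d' : ℝ) * g) = d' * g := Real.mul_self_sqrt (by positivity)
  have htt : √((m' : ℝ) * g) * √((m' : ℝ) * g) = m' * g := Real.mul_self_sqrt (by positivity)
  have hus : √((m' : ℝ) * d') * √((d' : ℝ) * g) = d' * √((m' : ℝ) * g) :=
    Real.sqrt_mul_sqrt_of_mul_eq (by positivity) (by positivity) (by ring)
  have htu : √((m' : ℝ) * g) * √((m' : ℝ) * d') = m' * √((d' : ℝ) * g) :=
    Real.sqrt_mul_sqrt_of_mul_eq (by positivity) (by positivity) (by ring)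
  constructor
  · rintro ⟨⟨a, ha⟩, k, hk⟩
    have hint : (m' : ℤ) * a = k * d' := by
      have : ((m' * a : ℤ) : ℝ) * g = (k * d' : ℤ) * g := by
        push_cast
        linear_combination (-(m' : ℝ) * g) * ha + √((d' : ℝ) * g) * hk + k * hss
      exact_mod_cast mul_right_cancel₀ (by positivity) this
    obtain ⟨b, rfl⟩ : (d' : ℤ) ∣ a :=
      (Nat.isCoprime_iff_coprime.mpr hcop.symm).dvd_of_dvd_mul_left ⟨k, by linarith⟩
    refine ⟨b, mul_right_cancel₀ hs.ne' ?_⟩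
    push_cast at ha
    linear_combination √((m' : ℝ) * g) * ha - b * hus
  · rintro ⟨b, hb⟩
    refine ⟨⟨b * d', mul_left_cancel₀ ht.ne' ?_⟩, b * m', ?_⟩
    · push_cast
      linear_combination √((d' : ℝ) * g) * hb + b * hus
    · push_cast
      linear_combination √((m' : ℝ) * g) * hb - htt * x + b * htu

section DiagLattice

variable {ι κ : Type*} [Fintype ι] [DecidableEq ι] [Fintype κ] [DecidableEq κ]

noncomputable def diagLattice (a : ι → ℝ) : Submodule ℤ (EuclideanSpace ℝ ι) :=
  Submodule.span ℤ (Set.range fun i => a i • EuclideanSpace.single i 1)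

lemma diagLattice_combination_apply (a : ι → ℝ) (c : ι → ℤ) (i : ι) :
    (∑ j, c j • a j • EuclideanSpace.single j (1 : ℝ)) i = c i * a i := by
  simp [Pi.single_apply, mul_comm]

theorem mem_diagLattice_iff {a : ι → ℝ} {v : EuclideanSpace ℝ ι} :
    v ∈ diagLattice a ↔ ∀ i, ∃ k : ℤ, v i = k * a i := by
  rw [diagLattice, Submodule.mem_span_range_iff_exists_fun]
  constructor
  · rintro ⟨c, rfl⟩ i
    exact ⟨c i, diagLattice_combination_apply a c i⟩
  · intro h
    choose c hc using h
    exact ⟨c, by ext i; rw [diagLattice_combination_apply, hc]⟩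

lemma inner_smul_single_one (v : EuclideanSpace ℝ ι) (r : ℝ) (i : ι) :
    ⟪v, r • EuclideanSpace.single i (1 : ℝ)⟫ = r * v i := by
  simp [real_inner_smul_right, EuclideanSpace.inner_single_right]

theorem forall_inner_diagLattice_int_iff {a : ι → ℝ} {v : EuclideanSpace ℝ ι} :
    (∀ x ∈ diagLattice a, ∃ k : ℤ, ⟪v, x⟫ = k) ↔ ∀ i, ∃ k : ℤ, a i * v i = k := by
  simp only [diagLattice, Submodule.mem_span_range_iff_exists_fun, forall_exists_index,
    forall_apply_eq_imp_iff]
  constructor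
  · intro h i
    simpa [Pi.single_apply, inner_smul_single_one] using h (Pi.single i 1)
  · intro h c
    choose k hk using h
    refine ⟨∑ i, c i * k i, ?_⟩
    simp only [inner_sum, ← Int.cast_smul_eq_zsmul ℝ, smul_smul, inner_smul_single_one,
      Int.cast_sum, Int.cast_mul, mul_assoc, hk]

theorem image_piLpCongrLeft_diagLattice (e : ι ≃ κ) (a : ι → ℝ) :
    LinearIsometryEquiv.piLpCongrLeft 2 ℝ ℝ e '' (diagLattice a : Set (EuclideanSpace ℝ ι)) =
      diagLattice (a ∘ e.symm) := by
  ext w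
  rw [LinearIsometryEquiv.image_eq_preimage_symm, Set.mem_preimage, SetLike.mem_coe,
    SetLike.mem_coe, mem_diagLattice_iff, mem_diagLattice_iff, e.forall_congr_left]
  simp [LinearIsometryEquiv.piLpCongrLeft_symm]

end DiagLattice

def partialDual {ι : Type*} [Fintype ι] (L : Submodule ℤ (EuclideanSpace ℝ ι)) (m : ℕ) :
    Set (EuclideanSpace ℝ ι) :=
  {v | (∀ x ∈ L, ∃ k : ℤ, ⟪v, x⟫ = k) ∧ (m : ℝ) • v ∈ L}

theorem sqrt_smul_partialDual_diagLattice {ι : Type*} [Fintype ι] [DecidableEq ι] {n : ι → ℕ}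
    (hn : ∀ i, 0 < n i) {m : ℕ} (hm : 0 < m) :
    {w | ∃ v ∈ partialDual (diagLattice fun i => √(n i)) m, w = √m • v} =
      diagLattice fun i => √(atkinLehner m (n i)) := by
  have hsqrt : (√m : ℝ) ≠ 0 := by positivity
  ext w
  simp only [partialDual, Set.mem_ofPred_eq, forall_inner_diagLattice_int_iff]
  simp only [SetLike.mem_coe, mem_diagLattice_iff, PiLp.smul_apply, smul_eq_mul]
  constructor
  · rintro ⟨v, ⟨hdual, hmul⟩, rfl⟩ i
    exact (exists_sqrt_mul_eq_int_mul_sqrt_atkinLehner_iff hm (hn i) (v i)).1 ⟨hdual i, hmul i⟩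
  · intro hw
    have hv i := (exists_sqrt_mul_eq_int_mul_sqrt_atkinLehner_iff hm (hn i) ((√m)⁻¹ * w i)).2
      (by rw [mul_inv_cancel_left₀ hsqrt]; exact hw i)
    exact ⟨(√m)⁻¹ • w, ⟨fun i => (hv i).1, fun i => (hv i).2⟩, (smul_inv_smul₀ hsqrt w).symm⟩

def atkinLehnerPerm {N m : ℕ} (hN : Squarefree N) (hm : m ∣ N) : Equiv.Perm (divIdx N) :=
  Function.Involutive.toPerm
    (fun d => ⟨atkinLehner m d.1, Nat.mem_divisors.2
      ⟨atkinLehner_dvd (Nat.pos_of_mem_divisors d.2) hm (Nat.dvd_of_mem_divisors d.2),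
        hN.ne_zero⟩⟩)
    fun d => Subtype.ext <|
      atkinLehner_atkinLehner (Nat.pos_of_dvd_of_pos hm (Nat.pos_of_ne_zero hN.ne_zero))
        (hN.squarefree_of_dvd (Nat.dvd_of_mem_divisors d.2))

theorem CN_strongly_modular_general (N : ℕ) (hsq : Squarefree N)
    (m : ℕ) (hm : m ∣ N) :
    ∃ f : EuclideanSpace ℝ (divIdx N) ≃ₗᵢ[ℝ] EuclideanSpace ℝ (divIdx N),
      f '' {w | ∃ v, ((∀ x ∈ CN N, ∃ k : ℤ, ⟪v, x⟫ = (k : ℝ)) ∧ (m : ℝ) • v ∈ CN N) ∧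
            w = Real.sqrt m • v} = (CN N : Set (EuclideanSpace ℝ (divIdx N))) := by
  have hm0 : 0 < m := Nat.pos_of_dvd_of_pos hm (Nat.pos_of_ne_zero hsq.ne_zero)
  let σ := atkinLehnerPerm hsq hm
  have hσ : (fun d => √(atkinLehner m d.1)) ∘ σ.symm = fun d : divIdx N => √(d.1 : ℝ) := by
    funext d
    exact congrArg (fun n : ℕ => √(n : ℝ)) (congrArg Subtype.val (σ.apply_symm_apply d))
  refine ⟨LinearIsometryEquiv.piLpCongrLeft 2 ℝ ℝ σ, ?_⟩
  calc _ = LinearIsometryEquiv.piLpCongrLeft 2 ℝ ℝ σ ''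
          (diagLattice fun d : divIdx N => √(atkinLehner m d.1) : Set _) :=
        congrArg _ (sqrt_smul_partialDual_diagLattice (fun d => Nat.pos_of_mem_divisors d.2) hm0)
    _ = _ := by rw [image_piLpCongrLeft_diagLattice, hσ]; rfl

/-- For square-free `N` and each (exact) divisor `m` of `N`, the rescaled partial dual
`√m·(C_N)^{*,m}` is isometric to `C_N`: the lattice `C_N` is strongly `N`-modular.
Here `(C_N)^{*,m} = C_N* ∩ (1/m)·C_N`. -/
theorem CN_strongly_modular (N : ℕ) (hN : 0 < N) (hsq : Squarefree N)
    (m : ℕ) (hm : m ∣ N) (hexact : Nat.Coprime m (N / m)) :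
    ∃ f : EuclideanSpace ℝ (divIdx N) ≃ₗᵢ[ℝ] EuclideanSpace ℝ (divIdx N),
      f '' {w | ∃ v, ((∀ x ∈ CN N, ∃ k : ℤ, ⟪v, x⟫ = (k : ℝ)) ∧ (m : ℝ) • v ∈ CN N) ∧
            w = Real.sqrt m • v} = (CN N : Set (EuclideanSpace ℝ (divIdx N))) :=
  CN_strongly_modular_general N hsq m hm
end

section
/- Let N be square-free and let L be a strongly N-modular lattice containing a vector of length 1 (square length 1). Then L has an orthogonal summand isometric to C_N = ⊥_{d∣N} √d·ℤ. -/
/-!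
Since `N` is square-free, every divisor `d ∣ N` is exact, so strong modularity gives an isometry
`f_d` with `f_d (√d · L^{*,d}) = L`. A norm-one vector `u ∈ L` lies in `L*` and `d u ∈ L`, so
`w_d = f_d (√d u)` is a vector of `L` of norm `d` whose inner products with all of `L` lie in `dℤ`.
For `d ≠ e` the product `⟪w_d, w_e⟫` is then divisible by `lcm d e`, whose square exceeds
`d e ≥ ⟪w_d, w_e⟫²`; so the `w_d` are pairwise orthogonal and span a copy of `C_N`. The same
divisibility makes the orthogonal projection onto that span map `L` into it, so it splits off `L`
as an orthogonal summand.
-/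

open scoped RealInnerProductSpace

theorem Nat.coprime_div_of_squarefree {N d : ℕ} (hN : Squarefree N) (hd : d ∣ N) :
    d.Coprime (N / d) :=
  (Nat.squarefree_mul_iff.1 (by rwa [Nat.mul_div_cancel' hd])).1

theorem Nat.eq_zero_of_dvd_of_dvd_of_mul_self_le {d e m : ℕ} (hne : d ≠ e) (hd : d ∣ m)
    (he : e ∣ m) (hm : m * m ≤ d * e) : m = 0 := by
  by_contra hm0
  have hd0 : 0 < d := Nat.pos_of_dvd_of_pos hd (Nat.pos_of_ne_zero hm0)
  have he0 : 0 < e := Nat.pos_of_dvd_of_pos he (Nat.pos_of_ne_zero hm0)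
  have hl0 : 0 < d.lcm e := Nat.lcm_pos hd0 he0
  have hlcm_le : d.lcm e ≤ m := Nat.le_of_dvd (Nat.pos_of_ne_zero hm0) (Nat.lcm_dvd hd he)
  -- `gcd ≤ min d e ≤ max d e ≤ lcm`, and equality throughout would force `d = e`
  have hgcd_lt : d.gcd e < d.lcm e := by
    have := Nat.gcd_le_left e hd0
    have := Nat.gcd_le_right d he0
    have := Nat.le_of_dvd hl0 (Nat.dvd_lcm_left d e)
    have := Nat.le_of_dvd hl0 (Nat.dvd_lcm_right d e)
    omega
  have := Nat.gcd_mul_lcm d e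
  nlinarith

theorem LinearIsometry.image_span_int_range {ι E F : Type*} [SeminormedAddCommGroup E]
    [NormedSpace ℝ E] [SeminormedAddCommGroup F] [NormedSpace ℝ F] (g : E →ₗᵢ[ℝ] F)
    (b : ι → E) :
    g '' (Submodule.span ℤ (Set.range b) : Set E) = Submodule.span ℤ (Set.range (g ∘ b)) := by
  rw [Set.range_comp]
  exact (Submodule.map_coe (g.toLinearMap.restrictScalars ℤ) _).symm.trans
    (congrArg SetLike.coe (Submodule.span_image _).symm)

section

variable {E : Type*} [NormedAddCommGroup E] [InnerProductSpace ℝ E]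

theorem inner_eq_zero_of_dvd_of_dvd {x y : E} {d e : ℕ} (hne : d ≠ e) (hx : ⟪x, x⟫ = d)
    (hy : ⟪y, y⟫ = e) (hdx : ∃ k : ℤ, ⟪x, y⟫ = d * k) (hey : ∃ k : ℤ, ⟪x, y⟫ = e * k) :
    ⟪x, y⟫ = 0 := by
  obtain ⟨k, hk⟩ := hdx
  obtain ⟨l, hl⟩ := hey
  have hkl : (d * k : ℤ) = e * l := by exact_mod_cast hk.symm.trans hl
  have hcs : ((d * k : ℤ) : ℝ) * (d * k : ℤ) ≤ d * e := by
    have := real_inner_mul_inner_self_le x y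
    rw [hx, hy, hk] at this
    exact_mod_cast this
  have hzero : (d * k : ℤ).natAbs = 0 := by
    refine Nat.eq_zero_of_dvd_of_dvd_of_mul_self_le hne ?_ ?_ ?_
    · exact Int.natCast_dvd.1 (dvd_mul_right _ _)
    · exact Int.natCast_dvd.1 (hkl ▸ dvd_mul_right _ _)
    · have : ((d * k : ℤ) * (d * k : ℤ)) ≤ d * e := by exact_mod_cast hcs
      rw [← Int.natAbs_mul_self'] at this
      exact_mod_cast this
  rw [hk]
  exact_mod_cast Int.natAbs_eq_zero.1 hzero

theorem Orthonormal.exists_linearIsometry_single {ι : Type*} [Fintype ι] [DecidableEq ι]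
    {v : ι → E} (hv : Orthonormal ℝ v) :
    ∃ F : EuclideanSpace ℝ ι →ₗᵢ[ℝ] E, ∀ i, F (EuclideanSpace.single i 1) = v i := by
  let b : Module.Basis ι ℝ (Submodule.span ℝ (Set.range v)) :=
    Module.Basis.span hv.linearIndependent
  have hb : Orthonormal ℝ b := by
    convert! orthonormal_span hv
    simp [b, Module.Basis.span_apply]
  let ob := OrthonormalBasis.mk hb (Module.Basis.span_eq _).ge
  refine ⟨(Submodule.span ℝ (Set.range v)).subtypeₗᵢ.comp ob.repr.symm.toLinearIsometry, ?_⟩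
  intro i
  simp [ob, b, Module.Basis.span_apply]

theorem exists_linearIsometry_sqrt_smul_single {ι : Type*} [Fintype ι] [DecidableEq ι]
    {w : ι → E} {a : ι → ℝ} (ha : ∀ i, 0 < a i) (hw : ∀ i, ⟪w i, w i⟫ = a i)
    (horth : Pairwise fun i j => ⟪w i, w j⟫ = 0) :
    ∃ F : EuclideanSpace ℝ ι →ₗᵢ[ℝ] E,
      ∀ i, F (Real.sqrt (a i) • EuclideanSpace.single i 1) = w i := by
  have hsqrt : ∀ i, Real.sqrt (a i) ≠ 0 := fun i => (Real.sqrt_pos.2 (ha i)).ne'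
  have hv : Orthonormal ℝ fun i => (Real.sqrt (a i))⁻¹ • w i := by
    rw [orthonormal_iff_ite]
    intro i j
    simp only [real_inner_smul_left, real_inner_smul_right]
    split_ifs with hij
    · subst hij
      rw [hw, ← mul_assoc, ← mul_inv, Real.mul_self_sqrt (ha i).le, inv_mul_cancel₀ (ha i).ne']
    · rw [horth hij, mul_zero, mul_zero]
  obtain ⟨F, hF⟩ := hv.exists_linearIsometry_single
  exact ⟨F, fun i => by rw [map_smul, hF, smul_inv_smul₀ (hsqrt i)]⟩

theorem span_sup_inf_orthogonal_eq {ι : Type*} [Fintype ι] (L : Submodule ℤ E) {w : ι → E}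
    (hwL : ∀ i, w i ∈ L) (horth : Pairwise fun i j => ⟪w i, w j⟫ = 0)
    (hdiv : ∀ i, ∀ x ∈ L, ∃ k : ℤ, ⟪w i, x⟫ = ⟪w i, w i⟫ * k) :
    Submodule.span ℤ (Set.range w) ⊔
      (L ⊓ (Submodule.span ℝ (Set.range w))ᗮ.restrictScalars ℤ) = L := by
  have hSL : Submodule.span ℤ (Set.range w) ≤ L :=
    Submodule.span_le.2 (Set.range_subset_iff.2 hwL)
  refine le_antisymm (sup_le hSL inf_le_left) ?_
  intro x hx
  choose k hk using fun i => hdiv i x hx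
  set s := ∑ i, k i • w i
  have hs : s ∈ Submodule.span ℤ (Set.range w) :=
    Submodule.sum_mem _ fun i _ => Submodule.smul_mem _ _ (Submodule.subset_span ⟨i, rfl⟩)
  have hws : ∀ j, ⟪w j, x - s⟫ = 0 := by
    intro j
    have hsum : ⟪w j, s⟫ = ⟪w j, w j⟫ * k j := by
      simp only [s, inner_sum, ← Int.cast_smul_eq_zsmul ℝ, real_inner_smul_right]
      rw [Finset.sum_eq_single j (fun i _ hij => by rw [horth (Ne.symm hij), mul_zero])
        (fun hj => absurd (Finset.mem_univ j) hj), mul_comm]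
    rw [inner_sub_right, hsum, hk, sub_self]
  have hperp : x - s ∈ (Submodule.span ℝ (Set.range w))ᗮ := by
    have : Submodule.span ℝ (Set.range w) ≤ (ℝ ∙ (x - s))ᗮ :=
      Submodule.span_le.2 <| Set.range_subset_iff.2 fun j =>
        Submodule.mem_orthogonal_singleton_iff_inner_left.2 (hws j)
    exact (Submodule.mem_orthogonal _ _).2 fun y hy =>
      Submodule.mem_orthogonal_singleton_iff_inner_left.1 (this hy)
  rw [← add_sub_cancel s x]
  exact Submodule.add_mem_sup hs ⟨L.sub_mem hx (hSL hs), hperp⟩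

theorem Submodule.inf_eq_bot_of_inner_eq_zero {S T : Submodule ℤ E}
    (h : ∀ x ∈ S, ∀ y ∈ T, ⟪x, y⟫ = 0) : S ⊓ T = ⊥ :=
  eq_bot_iff.2 fun x hx => (Submodule.mem_bot ℤ).2 (inner_self_eq_zero.1 (h x hx.1 x hx.2))

theorem inner_eq_zero_of_mem_span_int_of_mem_orthogonal {s : Set E} {x y : E}
    (hx : x ∈ Submodule.span ℤ s) (hy : y ∈ (Submodule.span ℝ s)ᗮ) : ⟪x, y⟫ = 0 :=
  Submodule.inner_right_of_mem_orthogonal (Submodule.span_le_restrictScalars ℤ ℝ s hx) hy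

/-- `√m · L^{*,m}`, where `L^{*,m} = L* ∩ (1/m) L`. -/
def rescaledPartialDual (L : Submodule ℤ E) (m : ℕ) : Set E :=
  {w | ∃ v, ((∀ x ∈ L, ∃ k : ℤ, ⟪v, x⟫ = (k : ℝ)) ∧ (m : ℝ) • v ∈ L) ∧ w = Real.sqrt m • v}

variable {L : Submodule ℤ E} {m : ℕ} {u : E}

theorem sqrt_smul_mem_rescaledPartialDual (hu : u ∈ L)
    (hu_dual : ∀ x ∈ L, ∃ k : ℤ, ⟪u, x⟫ = k) : Real.sqrt m • u ∈ rescaledPartialDual L m :=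
  ⟨u, ⟨hu_dual, by rw [Nat.cast_smul_eq_nsmul]; exact L.nsmul_mem hu m⟩, rfl⟩

theorem exists_inner_sqrt_smul_eq_mul (hu : u ∈ L) {y : E} (hy : y ∈ rescaledPartialDual L m) :
    ∃ k : ℤ, ⟪Real.sqrt m • u, y⟫ = m * k := by
  obtain ⟨v, ⟨hv_dual, -⟩, rfl⟩ := hy
  obtain ⟨k, hk⟩ := hv_dual u hu
  refine ⟨k, ?_⟩
  rw [real_inner_smul_left, real_inner_smul_right, ← mul_assoc,
    Real.mul_self_sqrt m.cast_nonneg, real_inner_comm, hk]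

section

variable {f : E ≃ₗᵢ[ℝ] E} (hf : f '' rescaledPartialDual L m = L)
include hf

theorem apply_sqrt_smul_mem (hu : u ∈ L) (hu_dual : ∀ x ∈ L, ∃ k : ℤ, ⟪u, x⟫ = k) :
    f (Real.sqrt m • u) ∈ L := by
  rw [← SetLike.mem_coe, ← hf]
  exact Set.mem_image_of_mem f (sqrt_smul_mem_rescaledPartialDual hu hu_dual)

theorem exists_inner_apply_sqrt_smul_eq_mul (hu : u ∈ L) {x : E} (hx : x ∈ L) :
    ∃ k : ℤ, ⟪f (Real.sqrt m • u), x⟫ = m * k := by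
  rw [← SetLike.mem_coe, ← hf] at hx
  obtain ⟨y, hy, rfl⟩ := hx
  rw [LinearIsometryEquiv.inner_map_map]
  exact exists_inner_sqrt_smul_eq_mul hu hy

end

end

theorem strongly_modular_with_norm_one_vector_general {n : ℕ} (N : ℕ)
    (hsq : Squarefree N)
    (L : Submodule ℤ (EuclideanSpace ℝ (Fin n)))
    (hint : ∀ x ∈ L, ∀ y ∈ L, ∃ k : ℤ, ⟪x, y⟫ = (k : ℝ))
    (hmod : ∀ m : ℕ, m ∣ N → Nat.Coprime m (N / m) →
      ∃ f : EuclideanSpace ℝ (Fin n) ≃ₗᵢ[ℝ] EuclideanSpace ℝ (Fin n),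
        f '' {w | ∃ v, ((∀ x ∈ L, ∃ k : ℤ, ⟪v, x⟫ = (k : ℝ)) ∧ (m : ℝ) • v ∈ L) ∧
              w = Real.sqrt m • v} = (L : Set (EuclideanSpace ℝ (Fin n))))
    (hone : ∃ v ∈ L, ⟪v, v⟫ = 1) :
    ∃ S T : Submodule ℤ (EuclideanSpace ℝ (Fin n)),
      S ⊔ T = L ∧ S ⊓ T = ⊥ ∧
      (∀ x ∈ S, ∀ y ∈ T, ⟪x, y⟫ = 0) ∧
      ∃ f : EuclideanSpace ℝ (divIdx N) →ₗᵢ[ℝ] EuclideanSpace ℝ (Fin n),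
        f '' (CN N : Set (EuclideanSpace ℝ (divIdx N))) =
          (S : Set (EuclideanSpace ℝ (Fin n))) := by
  obtain ⟨u, huL, huu⟩ := hone
  have hdvd (d : divIdx N) : d.1 ∣ N := Nat.dvd_of_mem_divisors d.2
  choose f hf using fun d : divIdx N =>
    hmod d.1 (hdvd d) (Nat.coprime_div_of_squarefree hsq (hdvd d))
  set w : divIdx N → EuclideanSpace ℝ (Fin n) := fun d => f d (Real.sqrt d.1 • u)
  have hwL (d : divIdx N) : w d ∈ L := apply_sqrt_smul_mem (hf d) huL (hint u huL)
  have hw_self (d : divIdx N) : ⟪w d, w d⟫ = d.1 := by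
    rw [LinearIsometryEquiv.inner_map_map, real_inner_smul_left, real_inner_smul_right, huu,
      mul_one, Real.mul_self_sqrt d.1.cast_nonneg]
  have hw_dvd (d : divIdx N) {x} (hx : x ∈ L) : ∃ k : ℤ, ⟪w d, x⟫ = d.1 * k :=
    exists_inner_apply_sqrt_smul_eq_mul (hf d) huL hx
  have horth : Pairwise fun d e => ⟪w d, w e⟫ = 0 := fun d e hde =>
    inner_eq_zero_of_dvd_of_dvd (Subtype.coe_injective.ne hde) (hw_self d) (hw_self e)
      (hw_dvd d (hwL e)) (real_inner_comm (w d) (w e) ▸ hw_dvd e (hwL d))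
  obtain ⟨F, hF⟩ := exists_linearIsometry_sqrt_smul_single
    (fun d => Nat.cast_pos.2 (Nat.pos_of_mem_divisors d.2)) hw_self horth
  refine ⟨Submodule.span ℤ (Set.range w),
    L ⊓ (Submodule.span ℝ (Set.range w))ᗮ.restrictScalars ℤ,
    span_sup_inf_orthogonal_eq L hwL horth fun d x hx => hw_self d ▸ hw_dvd d hx,
    Submodule.inf_eq_bot_of_inner_eq_zero fun x hx y hy =>
      inner_eq_zero_of_mem_span_int_of_mem_orthogonal hx hy.2,
    fun x hx y hy => inner_eq_zero_of_mem_span_int_of_mem_orthogonal hx hy.2, F, ?_⟩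
  rw [CN, F.image_span_int_range]
  congr 3
  exact funext hF

/-- Let `N` be square-free and `L` a strongly `N`-modular (integral) lattice containing a
vector of square length 1. Then `L` has an orthogonal summand isometric to `C_N`. -/
theorem strongly_modular_with_norm_one_vector {n : ℕ} (N : ℕ) (hN : 0 < N)
    (hsq : Squarefree N)
    (L : Submodule ℤ (EuclideanSpace ℝ (Fin n)))
    (hint : ∀ x ∈ L, ∀ y ∈ L, ∃ k : ℤ, ⟪x, y⟫ = (k : ℝ))
    (hmod : ∀ m : ℕ, m ∣ N → Nat.Coprime m (N / m) →
      ∃ f : EuclideanSpace ℝ (Fin n) ≃ₗᵢ[ℝ] EuclideanSpace ℝ (Fin n),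
        f '' {w | ∃ v, ((∀ x ∈ L, ∃ k : ℤ, ⟪v, x⟫ = (k : ℝ)) ∧ (m : ℝ) • v ∈ L) ∧
              w = Real.sqrt m • v} = (L : Set (EuclideanSpace ℝ (Fin n))))
    (hone : ∃ v ∈ L, ⟪v, v⟫ = 1) :
    ∃ S T : Submodule ℤ (EuclideanSpace ℝ (Fin n)),
      S ⊔ T = L ∧ S ⊓ T = ⊥ ∧
      (∀ x ∈ S, ∀ y ∈ T, ⟪x, y⟫ = 0) ∧
      ∃ f : EuclideanSpace ℝ (divIdx N) →ₗᵢ[ℝ] EuclideanSpace ℝ (Fin n),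
        f '' (CN N : Set (EuclideanSpace ℝ (divIdx N))) =
          (S : Set (EuclideanSpace ℝ (Fin n))) :=
  strongly_modular_with_norm_one_vector_general N hsq L hint hmod hone
end
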